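/- arXiv:2603.13704 — 3 statements merged into one kernel-verified Lean document; each statement's English description precedes it below -/
import Mathlib

section
/- Suppose E[κ_X(X,X)] < ∞ and E[κ_Z(Z,Z)] < ∞, and that for every g ∈ G_X the function z ↦ E[g(X) | Z = z] has a version belonging to G_Z. Then for every f in the orthogonal complement of ker(Σ_ZZ) in G_Z and every g ∈ G_X, one has ⟨B_{X|Z} f, g⟩_{G_X} = ⟨f, E[g(X) | Z = ·]⟩_{G_Z}, where B_{X|Z} = Σ_XZ Σ_ZZ^†. The analogous identity holds with (Y, G_Y) in place of (X, G_X). -/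
/-!
# Statement 0

RKHSs are modelled through their canonical feature maps `k : H → G`,
`x ↦ κ(·,x)`, into separable Hilbert spaces whose closed linear span is the
whole space; the reproducing property reads `f(x) = ⟪k x, f⟫` and
`κ(x,x') = ⟪k x, k x'⟫`.  The Moore–Penrose inverse of the covariance
operator is encoded through the Penrose axioms.

Statement: under the moment assumptions `E[κ_X(X,X)] < ∞`, `E[κ_Y(Y,Y)] < ∞`,
`E[κ_Z(Z,Z)] < ∞` and the assumption that `z ↦ E[g(X)|Z=z]` (resp. for `Y`)
has a version in `G_Z` for every `g`, for every `f ∈ (ker Σ_ZZ)ᗮ` and every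
`g`, `⟪B_{X|Z} f, g⟫ = ⟪f, E[g(X)|Z=·]⟫` with `B_{X|Z} = Σ_XZ Σ_ZZ^†`;
and analogously for `Y`.
-/

open MeasureTheory ProbabilityTheory Filter
open scoped RealInnerProductSpace

noncomputable section

/-- The rank-one operator `u ⊗ v : H₂ → H₁`, `w ↦ ⟪v, w⟫ u`. -/
def rankOne {H1 H2 : Type*} [NormedAddCommGroup H1] [InnerProductSpace ℝ H1]
    [NormedAddCommGroup H2] [InnerProductSpace ℝ H2] (u : H1) (v : H2) : H2 →L[ℝ] H1 :=
  (innerSL ℝ v).smulRight u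

variable {Ω : Type*} [MeasurableSpace Ω]

/-- The mean element `μ = E[k(·,X)] ∈ G` (Bochner integral). -/
def meanElem {H G : Type*} [NormedAddCommGroup G] [InnerProductSpace ℝ G] [CompleteSpace G]
    (P : Measure Ω) (k : H → G) (X : Ω → H) : G :=
  ∫ ω, k (X ω) ∂P

/-- The centered kernel section `κ̃(·,x) = κ(·,x) − μ`. -/
def ctrKer {H G : Type*} [NormedAddCommGroup G] [InnerProductSpace ℝ G] [CompleteSpace G]
    (P : Measure Ω) (k : H → G) (X : Ω → H) (x : H) : G :=
  k x - meanElem P k X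

/-- The (cross-)covariance operator `Σ_{XZ} = E[κ̃_X(·,X) ⊗ κ̃_Z(·,Z)] : G₂ → G₁`. -/
def crossCov {H1 G1 H2 G2 : Type*}
    [NormedAddCommGroup G1] [InnerProductSpace ℝ G1] [CompleteSpace G1]
    [NormedAddCommGroup G2] [InnerProductSpace ℝ G2] [CompleteSpace G2]
    (P : Measure Ω) (k1 : H1 → G1) (X : Ω → H1) (k2 : H2 → G2) (Z : Ω → H2) :
    G2 →L[ℝ] G1 :=
  ∫ ω, rankOne (ctrKer P k1 X (X ω)) (ctrKer P k2 Z (Z ω)) ∂P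

/-- The Penrose axioms characterizing the Moore–Penrose inverse `dag` of a
self-adjoint operator `C` (the two compositions are symmetric). -/
def IsMoorePenroseInv {G : Type*} [NormedAddCommGroup G] [InnerProductSpace ℝ G]
    (C : G →L[ℝ] G) (dag : G →ₗ[ℝ] G) : Prop :=
  (∀ f, C (dag (C f)) = C f) ∧ (∀ f, dag (C (dag f)) = dag f) ∧
    (∀ f g, ⟪C (dag f), g⟫ = ⟪f, C (dag g)⟫) ∧
    (∀ f g, ⟪dag (C f), g⟫ = ⟪f, dag (C g)⟫)

/-! Testing the cross-covariance against `g` gives a covariance of real random variables,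
`⟪Σ_XZ e, g⟫ = Cov(g(X), e(Z))`. As `e(Z)` is `σ(Z)`-measurable, the tower property lets `g(X)`
be replaced by `E[g(X) | Z] = h(Z)`, whence `⟪Σ_XZ e, g⟫ = ⟪Σ_ZZ e, h⟫` for every `e`. Finally
`Σ_ZZ` is symmetric, so `(range Σ_ZZ)ᗮ = ker Σ_ZZ`; the Penrose axioms make `Σ_ZZ Σ_ZZ^† f - f`
orthogonal to the range, and for `f ∈ (ker Σ_ZZ)ᗮ` it also lies in `(ker Σ_ZZ)ᗮ`, so
`Σ_ZZ Σ_ZZ^† f = f`; take `e = Σ_ZZ^† f`. -/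

lemma rankOne_norm {H1 H2 : Type*} [NormedAddCommGroup H1] [InnerProductSpace ℝ H1]
    [NormedAddCommGroup H2] [InnerProductSpace ℝ H2] (u : H1) (v : H2) :
    ‖rankOne u v‖ = ‖v‖ * ‖u‖ := by
  rw [rankOne, ContinuousLinearMap.norm_smulRight_apply, innerSL_apply_norm]

lemma memLp_two_of_integrable_inner_self {P : Measure Ω} {G : Type*} [NormedAddCommGroup G]
    [InnerProductSpace ℝ G] {U : Ω → G} (hU : AEStronglyMeasurable U P)
    (h : Integrable (fun ω => ⟪U ω, U ω⟫) P) : MemLp U 2 P := by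
  rw [memLp_two_iff_integrable_sq_norm hU]
  simpa only [real_inner_self_eq_norm_sq] using h

section Covariance

variable {P : Measure Ω} [IsProbabilityMeasure P]

lemma covariance_congr_condExp_left {β : Type*} [MeasurableSpace β] {Z : Ω → β}
    (hZ : Measurable Z) {φ : β → ℝ} (hφ : Measurable φ) {A A' : Ω → ℝ} (hA : MemLp A 2 P)
    (hB : MemLp (fun ω => φ (Z ω)) 2 P)
    (hA' : A' =ᵐ[P] P[A|MeasurableSpace.comap Z inferInstance]) :
    cov[A', fun ω => φ (Z ω); P] = cov[A, fun ω => φ (Z ω); P] := by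
  set m := MeasurableSpace.comap Z inferInstance
  set B := fun ω => φ (Z ω)
  have hm : m ≤ _ := hZ.comap_le
  have hBm : StronglyMeasurable[m] B := (hφ.comp (comap_measurable Z)).stronglyMeasurable
  have hmul : ∫ ω, A' ω * B ω ∂P = ∫ ω, A ω * B ω ∂P := calc
    ∫ ω, A' ω * B ω ∂P = ∫ ω, (P[A|m] * B) ω ∂P :=
      integral_congr_ae (hA'.mul (ae_eq_refl B))
    _ = ∫ ω, P[A * B|m] ω ∂P :=
      integral_congr_ae (condExp_mul_of_stronglyMeasurable_right hBm
        (hA.integrable_mul hB) (hA.integrable one_le_two)).symm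
    _ = ∫ ω, A ω * B ω ∂P := integral_condExp hm
  have hmean : ∫ ω, A' ω ∂P = ∫ ω, A ω ∂P :=
    (integral_congr_ae hA').trans (integral_condExp hm)
  rw [covariance_eq_sub ((hA.condExp one_le_two).ae_eq hA'.symm) hB, covariance_eq_sub hA hB]
  simp only [Pi.mul_apply, hmul, hmean]

end Covariance

section CrossCovariance

variable {P : Measure Ω} {H1 H2 G1 G2 : Type*}
  [NormedAddCommGroup G1] [InnerProductSpace ℝ G1] [CompleteSpace G1]
  [NormedAddCommGroup G2] [InnerProductSpace ℝ G2] [CompleteSpace G2]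

lemma inner_meanElem {k : H1 → G1} {X : Ω → H1} (hU : Integrable (fun ω => k (X ω)) P)
    (g : G1) : ⟪meanElem P k X, g⟫ = ∫ ω, ⟪k (X ω), g⟫ ∂P := by
  rw [meanElem, real_inner_comm, ← integral_inner hU]
  simp only [real_inner_comm g]

lemma inner_crossCov_apply [IsProbabilityMeasure P] {k1 : H1 → G1} {X : Ω → H1}
    {k2 : H2 → G2} {Z : Ω → H2}
    (hU : MemLp (fun ω => k1 (X ω)) 2 P) (hV : MemLp (fun ω => k2 (Z ω)) 2 P)
    (e : G2) (g : G1) :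
    ⟪crossCov P k1 X k2 Z e, g⟫ =
      cov[fun ω => ⟪k1 (X ω), g⟫, fun ω => ⟪k2 (Z ω), e⟫; P] := by
  have hU' : MemLp (fun ω => ctrKer P k1 X (X ω)) 2 P := hU.sub (memLp_const _)
  have hV' : MemLp (fun ω => ctrKer P k2 Z (Z ω)) 2 P := hV.sub (memLp_const _)
  have hint : Integrable (fun ω => rankOne (ctrKer P k1 X (X ω)) (ctrKer P k2 Z (Z ω))) P :=
    (hV'.norm.integrable_mul hU'.norm).mono'
      ((ContinuousLinearMap.smulRightL ℝ G2 G1).aestronglyMeasurable_comp₂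
        ((innerSL ℝ).continuous.comp_aestronglyMeasurable hV'.1) hU'.1)
      (ae_of_all _ fun ω => (rankOne_norm _ _).le)
  calc ⟪crossCov P k1 X k2 Z e, g⟫
      = ((innerSL ℝ g).comp (ContinuousLinearMap.apply ℝ G1 e)) (crossCov P k1 X k2 Z) :=
        real_inner_comm _ _
    _ = ∫ ω, ⟪ctrKer P k1 X (X ω), g⟫ * ⟪ctrKer P k2 Z (Z ω), e⟫ ∂P := by
        rw [crossCov, ← ContinuousLinearMap.integral_comp_comm _ hint]
        simp only [ContinuousLinearMap.comp_apply, ContinuousLinearMap.apply_apply, rankOne,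
          ContinuousLinearMap.smulRight_apply, innerSL_apply_apply, real_inner_smul_right]
        simp only [real_inner_comm g, mul_comm]
    _ = _ := by
        simp only [covariance, ctrKer, inner_sub_left, inner_meanElem (hU.integrable one_le_two),
          inner_meanElem (hV.integrable one_le_two)]

lemma crossCov_self_isSymmetric [IsProbabilityMeasure P] {k2 : H2 → G2} {Z : Ω → H2}
    (hV : MemLp (fun ω => k2 (Z ω)) 2 P) :
    (crossCov P k2 Z k2 Z : G2 →ₗ[ℝ] G2).IsSymmetric := fun u v => by
  rw [ContinuousLinearMap.coe_coe, real_inner_comm _ u,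
    inner_crossCov_apply hV hV, inner_crossCov_apply hV hV, covariance_comm]

end CrossCovariance

section MoorePenrose

variable {G : Type*} [NormedAddCommGroup G] [InnerProductSpace ℝ G]

lemma IsMoorePenroseInv.apply_apply_of_mem_orthogonal_ker {C : G →L[ℝ] G}
    (hC : (C : G →ₗ[ℝ] G).IsSymmetric) {dag : G →ₗ[ℝ] G} (hdag : IsMoorePenroseInv C dag)
    {f : G} (hf : f ∈ (LinearMap.ker (C : G →ₗ[ℝ] G))ᗮ) : C (dag f) = f := by
  obtain ⟨hCdC, -, hCd, -⟩ := hdag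
  have hran : C (dag f) - f ∈ (LinearMap.range (C : G →ₗ[ℝ] G))ᗮ := by
    rintro _ ⟨v, rfl⟩
    rw [ContinuousLinearMap.coe_coe, inner_sub_right, ← hCd, hCdC, sub_self]
  have hker : C (dag f) - f ∈ (LinearMap.ker (C : G →ₗ[ℝ] G))ᗮ := by
    refine sub_mem ?_ hf
    rw [← hC.orthogonal_range]
    exact Submodule.le_orthogonal_orthogonal _ ⟨dag f, rfl⟩
  rw [hC.orthogonal_range] at hran
  exact sub_eq_zero.mp (Submodule.disjoint_def.mp (Submodule.orthogonal_disjoint _) _ hran hker)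

end MoorePenrose

section ConditionalMean

variable {P : Measure Ω} [IsProbabilityMeasure P] {H1 H2 G1 G2 : Type*} [MeasurableSpace H2]
  [NormedAddCommGroup G1] [InnerProductSpace ℝ G1] [CompleteSpace G1]
  [NormedAddCommGroup G2] [InnerProductSpace ℝ G2] [CompleteSpace G2]
  [MeasurableSpace G2] [BorelSpace G2]
  {k1 : H1 → G1} {X : Ω → H1} {k2 : H2 → G2} {Z : Ω → H2}

lemma inner_crossCov_eq_inner_crossCov_self_of_condExp (hZ : Measurable Z) (hk2 : Measurable k2)
    (hU : MemLp (fun ω => k1 (X ω)) 2 P) (hV : MemLp (fun ω => k2 (Z ω)) 2 P) {g : G1} {h : G2}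
    (hh : (fun ω => ⟪k2 (Z ω), h⟫) =ᵐ[P]
        P[(fun ω => ⟪k1 (X ω), g⟫)|MeasurableSpace.comap Z inferInstance])
    (e : G2) :
    ⟪crossCov P k1 X k2 Z e, g⟫ = ⟪crossCov P k2 Z k2 Z e, h⟫ := by
  rw [inner_crossCov_apply hU hV, inner_crossCov_apply hV hV]
  exact (covariance_congr_condExp_left hZ (φ := fun v => ⟪k2 v, e⟫)
    ((continuous_id.inner continuous_const).measurable.comp hk2) (hU.inner_const g)
    (hV.inner_const e) hh).symm

lemma inner_crossCov_apply_moorePenrose_of_condExp (hZ : Measurable Z) (hk2 : Measurable k2)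
    (hU : MemLp (fun ω => k1 (X ω)) 2 P) (hV : MemLp (fun ω => k2 (Z ω)) 2 P)
    {dag : G2 →ₗ[ℝ] G2} (hdag : IsMoorePenroseInv (crossCov P k2 Z k2 Z) dag)
    {f : G2} (hf : f ∈ (LinearMap.ker (crossCov P k2 Z k2 Z : G2 →ₗ[ℝ] G2))ᗮ) {g : G1} {h : G2}
    (hh : (fun ω => ⟪k2 (Z ω), h⟫) =ᵐ[P]
        P[(fun ω => ⟪k1 (X ω), g⟫)|MeasurableSpace.comap Z inferInstance]) :
    ⟪crossCov P k1 X k2 Z (dag f), g⟫ = ⟪f, h⟫ := by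
  rw [inner_crossCov_eq_inner_crossCov_self_of_condExp hZ hk2 hU hV hh,
    hdag.apply_apply_of_mem_orthogonal_ker (crossCov_self_isSymmetric hV) hf]

end ConditionalMean

theorem statement0_general
    (P : Measure Ω) [IsProbabilityMeasure P]
    {HX HY HZ GX GY GZ : Type*}
    -- the sample Hilbert spaces, as measurable spaces with their Borel σ-fields
    [MeasurableSpace HX] [MeasurableSpace HY] [MeasurableSpace HZ]
    -- the RKHSs, as separable Hilbert spaces
    [NormedAddCommGroup GX] [InnerProductSpace ℝ GX] [CompleteSpace GX]
    [SecondCountableTopology GX] [MeasurableSpace GX] [BorelSpace GX]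
    [NormedAddCommGroup GY] [InnerProductSpace ℝ GY] [CompleteSpace GY]
    [SecondCountableTopology GY] [MeasurableSpace GY] [BorelSpace GY]
    [NormedAddCommGroup GZ] [InnerProductSpace ℝ GZ] [CompleteSpace GZ]
    [SecondCountableTopology GZ] [MeasurableSpace GZ] [BorelSpace GZ]
    -- random elements
    (X : Ω → HX) (Y : Ω → HY) (Z : Ω → HZ)
    (hX : Measurable X) (hY : Measurable Y) (hZ : Measurable Z)
    -- feature maps x ↦ κ(·,x) of the kernels, measurable, generating the RKHSs
    (kX : HX → GX) (kY : HY → GY) (kZ : HZ → GZ)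
    (hkX : Measurable kX) (hkY : Measurable kY) (hkZ : Measurable kZ)
    -- moment assumptions  E[κ(X,X)] < ∞
    (hmX : Integrable (fun ω => ⟪kX (X ω), kX (X ω)⟫) P)
    (hmY : Integrable (fun ω => ⟪kY (Y ω), kY (Y ω)⟫) P)
    (hmZ : Integrable (fun ω => ⟪kZ (Z ω), kZ (Z ω)⟫) P)
    -- the Moore–Penrose inverse of Σ_ZZ
    (dag : GZ →ₗ[ℝ] GZ)
    (hdag : IsMoorePenroseInv (crossCov P kZ Z kZ Z) dag) :
    (∀ f : GZ, f ∈ (LinearMap.ker (crossCov P kZ Z kZ Z : GZ →ₗ[ℝ] GZ))ᗮ →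
      ∀ g : GX, ∀ h : GZ,
        ((fun ω => ⟪kZ (Z ω), h⟫) =ᵐ[P]
          P[(fun ω => ⟪kX (X ω), g⟫)|MeasurableSpace.comap Z inferInstance]) →
        ⟪crossCov P kX X kZ Z (dag f), g⟫ = ⟪f, h⟫) ∧
    (∀ f : GZ, f ∈ (LinearMap.ker (crossCov P kZ Z kZ Z : GZ →ₗ[ℝ] GZ))ᗮ →
      ∀ g : GY, ∀ h : GZ,
        ((fun ω => ⟪kZ (Z ω), h⟫) =ᵐ[P]
          P[(fun ω => ⟪kY (Y ω), g⟫)|MeasurableSpace.comap Z inferInstance]) →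
        ⟪crossCov P kY Y kZ Z (dag f), g⟫ = ⟪f, h⟫) := by
  have hV := memLp_two_of_integrable_inner_self (hkZ.comp hZ).aestronglyMeasurable hmZ
  exact ⟨fun f hf g h hh => inner_crossCov_apply_moorePenrose_of_condExp hZ hkZ
      (memLp_two_of_integrable_inner_self (hkX.comp hX).aestronglyMeasurable hmX) hV hdag hf hh,
    fun f hf g h hh => inner_crossCov_apply_moorePenrose_of_condExp hZ hkZ
      (memLp_two_of_integrable_inner_self (hkY.comp hY).aestronglyMeasurable hmY) hV hdag hf hh⟩

theorem statement0
    (P : Measure Ω) [IsProbabilityMeasure P]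
    {HX HY HZ GX GY GZ : Type*}
    -- the sample Hilbert spaces, as measurable spaces with their Borel σ-fields
    [NormedAddCommGroup HX] [InnerProductSpace ℝ HX] [CompleteSpace HX]
    [SecondCountableTopology HX] [MeasurableSpace HX] [BorelSpace HX]
    [NormedAddCommGroup HY] [InnerProductSpace ℝ HY] [CompleteSpace HY]
    [SecondCountableTopology HY] [MeasurableSpace HY] [BorelSpace HY]
    [NormedAddCommGroup HZ] [InnerProductSpace ℝ HZ] [CompleteSpace HZ]
    [SecondCountableTopology HZ] [MeasurableSpace HZ] [BorelSpace HZ]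
    -- the RKHSs, as separable Hilbert spaces
    [NormedAddCommGroup GX] [InnerProductSpace ℝ GX] [CompleteSpace GX]
    [SecondCountableTopology GX] [MeasurableSpace GX] [BorelSpace GX]
    [NormedAddCommGroup GY] [InnerProductSpace ℝ GY] [CompleteSpace GY]
    [SecondCountableTopology GY] [MeasurableSpace GY] [BorelSpace GY]
    [NormedAddCommGroup GZ] [InnerProductSpace ℝ GZ] [CompleteSpace GZ]
    [SecondCountableTopology GZ] [MeasurableSpace GZ] [BorelSpace GZ]
    -- random elements
    (X : Ω → HX) (Y : Ω → HY) (Z : Ω → HZ)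
    (hX : Measurable X) (hY : Measurable Y) (hZ : Measurable Z)
    -- feature maps x ↦ κ(·,x) of the kernels, measurable, generating the RKHSs
    (kX : HX → GX) (kY : HY → GY) (kZ : HZ → GZ)
    (hkX : Measurable kX) (hkY : Measurable kY) (hkZ : Measurable kZ)
    (hdX : (Submodule.span ℝ (Set.range kX)).topologicalClosure = ⊤)
    (hdY : (Submodule.span ℝ (Set.range kY)).topologicalClosure = ⊤)
    (hdZ : (Submodule.span ℝ (Set.range kZ)).topologicalClosure = ⊤)
    -- moment assumptions  E[κ(X,X)] < ∞
    (hmX : Integrable (fun ω => ⟪kX (X ω), kX (X ω)⟫) P)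
    (hmY : Integrable (fun ω => ⟪kY (Y ω), kY (Y ω)⟫) P)
    (hmZ : Integrable (fun ω => ⟪kZ (Z ω), kZ (Z ω)⟫) P)
    -- conditional expectation assumption: E[g(X)|Z=·] has a version in G_Z
    (hCEX : ∀ g : GX, ∃ h : GZ,
      (fun ω => ⟪kZ (Z ω), h⟫) =ᵐ[P]
        P[(fun ω => ⟪kX (X ω), g⟫)|MeasurableSpace.comap Z inferInstance])
    (hCEY : ∀ g : GY, ∃ h : GZ,
      (fun ω => ⟪kZ (Z ω), h⟫) =ᵐ[P]
        P[(fun ω => ⟪kY (Y ω), g⟫)|MeasurableSpace.comap Z inferInstance])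
    -- the Moore–Penrose inverse of Σ_ZZ
    (dag : GZ →ₗ[ℝ] GZ)
    (hdag : IsMoorePenroseInv (crossCov P kZ Z kZ Z) dag) :
    (∀ f : GZ, f ∈ (LinearMap.ker (crossCov P kZ Z kZ Z : GZ →ₗ[ℝ] GZ))ᗮ →
      ∀ g : GX, ∀ h : GZ,
        ((fun ω => ⟪kZ (Z ω), h⟫) =ᵐ[P]
          P[(fun ω => ⟪kX (X ω), g⟫)|MeasurableSpace.comap Z inferInstance]) →
        ⟪crossCov P kX X kZ Z (dag f), g⟫ = ⟪f, h⟫) ∧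
    (∀ f : GZ, f ∈ (LinearMap.ker (crossCov P kZ Z kZ Z : GZ →ₗ[ℝ] GZ))ᗮ →
      ∀ g : GY, ∀ h : GZ,
        ((fun ω => ⟪kZ (Z ω), h⟫) =ᵐ[P]
          P[(fun ω => ⟪kY (Y ω), g⟫)|MeasurableSpace.comap Z inferInstance]) →
        ⟪crossCov P kY Y kZ Z (dag f), g⟫ = ⟪f, h⟫) :=
  statement0_general P X Y Z hX hY hZ kX kY kZ hkX hkY hkZ hmX hmY hmZ dag hdag
end
end

section
/- Suppose E[κ_X(X,X)] < ∞ and E[κ_Z(Z,Z)] < ∞, and that for every g ∈ G_X the function z ↦ E[g(X) | Z = z] has a version belonging to G_Z. Then, for P_Z-almost every z, the conditional expectation of the G_X-valued random element κ̃_X(·,X) given Z = z satisfies E[κ̃_X(·,X) | Z = z] = B_{X|Z} κ̃_Z(·,z), where B_{X|Z} = Σ_XZ Σ_ZZ^†. The analogous identity E[κ̃_Y(·,Y) | Z = z] = B_{Y|Z} κ̃_Z(·,z) holds with (Y, G_Y) in place of (X, G_X) under the corresponding assumptions. -/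
/-!
# Statement 2

Under the moment assumptions and the conditional-expectation assumption,
`E[κ̃_X(·,X) | Z = z] = B_{X|Z} κ̃_Z(·,z)` for `P_Z`-a.e. `z`, where
`B_{X|Z} = Σ_XZ Σ_ZZ^†`; analogously for `Y`.  The statement is expressed
through conditional expectations given the σ-field generated by `Z`:
`E[κ̃_X(·,X) | σ(Z)] = B_{X|Z} κ̃_Z(·,Z)` a.s.

RKHSs are modelled through their feature maps; the Moore–Penrose inverse of
`Σ_ZZ` is encoded through the Penrose axioms.
-/

open MeasureTheory ProbabilityTheory Filter
open scoped RealInnerProductSpace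

noncomputable section

variable {Ω : Type*} [MeasurableSpace Ω]

/-!
Test both sides against `g ∈ G_X`. After centering, the hypothesis gives `h ∈ G_Z` with
`⟪E[κ̃_X(·,X) | Z], g⟫ = ⟪κ̃_Z(·,Z), h⟫`; pulling the `σ(Z)`-measurable factor out of the
conditional expectation then shows `Σ_XZ* g = Σ_ZZ h`, so that
`⟪g, Σ_XZ Σ_ZZ^† κ̃_Z(·,Z)⟫ = ⟪Σ_ZZ Σ_ZZ^† h, κ̃_Z(·,Z)⟫` by the Penrose axioms. The defect
`h - Σ_ZZ Σ_ZZ^† h` lies in `ker Σ_ZZ`, and `⟪v, Σ_ZZ v⟫ = E ⟪v, κ̃_Z(·,Z)⟫²` shows that this kernel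
is almost surely orthogonal to `κ̃_Z(·,Z)`. Separability of `G_X` turns the identities for each
`g` into the identity of vectors.
-/

section RankOne

variable {E F : Type*} [NormedAddCommGroup E] [InnerProductSpace ℝ E]
  [NormedAddCommGroup F] [InnerProductSpace ℝ F]

def rankOneL : E →L[ℝ] F →L[ℝ] F →L[ℝ] E :=
  ((ContinuousLinearMap.smulRightL ℝ F E).comp (innerSL ℝ)).flip

@[simp]
lemma rankOne_apply (u : E) (v w : F) : rankOne u v w = ⟪v, w⟫ • u := rfl

end RankOne

section L2

variable {α E F : Type*} {m m₀ : MeasurableSpace α} {μ : Measure α}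
  [NormedAddCommGroup E] [InnerProductSpace ℝ E] [NormedAddCommGroup F] [InnerProductSpace ℝ F]
  {φ : α → E} {ψ : α → F}

lemma memLp_two_of_integrable_inner_self_s2 {f : α → E} (hf : AEStronglyMeasurable f μ)
    (h : Integrable (fun x => ⟪f x, f x⟫) μ) : MemLp f 2 μ :=
  (memLp_two_iff_integrable_sq_norm hf).2
    (h.congr (.of_forall fun _ => real_inner_self_eq_norm_sq _))

lemma MeasureTheory.MemLp.integrable_rankOne (hφ : MemLp φ 2 μ) (hψ : MemLp ψ 2 μ) :
    Integrable (fun x => rankOne (φ x) (ψ x)) μ :=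
  memLp_one_iff_integrable.1 (rankOneL.memLp_of_bilin 1 hφ hψ)

lemma inner_integral_rankOne_apply [CompleteSpace E]
    (h : Integrable (fun x => rankOne (φ x) (ψ x)) μ) (f : E) (v : F) :
    ⟪f, (∫ x, rankOne (φ x) (ψ x) ∂μ) v⟫ = ∫ x, ⟪f, φ x⟫ * ⟪ψ x, v⟫ ∂μ := by
  rw [ContinuousLinearMap.integral_apply h, ← integral_inner (h.apply_continuousLinearMap v)]
  simp only [rankOne_apply, real_inner_smul_right, mul_comm]

lemma isSymmetric_integral_rankOne_self [CompleteSpace F] (hψ : MemLp ψ 2 μ) :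
    ((∫ x, rankOne (ψ x) (ψ x) ∂μ : F →L[ℝ] F) : F →ₗ[ℝ] F).IsSymmetric := by
  intro u v
  simp only [ContinuousLinearMap.coe_coe]
  rw [real_inner_comm, inner_integral_rankOne_apply (hψ.integrable_rankOne hψ),
    inner_integral_rankOne_apply (hψ.integrable_rankOne hψ)]
  simp only [real_inner_comm, mul_comm]

lemma ae_inner_eq_zero_of_integral_rankOne_self_apply_eq_zero [CompleteSpace F]
    (hψ : MemLp ψ 2 μ) {v : F}
    (hv : (∫ x, rankOne (ψ x) (ψ x) ∂μ) v = 0) : ∀ᵐ x ∂μ, ⟪v, ψ x⟫ = 0 := by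
  have hsq : ∫ x, ⟪v, ψ x⟫ ^ 2 ∂μ = 0 := by
    have h := inner_integral_rankOne_apply (hψ.integrable_rankOne hψ) v v
    rw [hv, inner_zero_right] at h
    simpa only [sq, real_inner_comm v] using h.symm
  have hint : Integrable (fun x => ⟪v, ψ x⟫ ^ 2) μ := (hψ.const_inner v).integrable_sq
  filter_upwards [(integral_eq_zero_iff_of_nonneg (fun x => sq_nonneg _) hint).mp hsq]
    with x hx
  exact pow_eq_zero_iff two_ne_zero |>.mp hx

lemma integral_rankOne_condExp [CompleteSpace E] (hm : m ≤ m₀) [SigmaFinite (μ.trim hm)]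
    (hψ : AEStronglyMeasurable[m] ψ μ) (hφψ : Integrable (fun x => rankOne (φ x) (ψ x)) μ)
    (hφ : Integrable φ μ) :
    ∫ x, rankOne (μ[φ|m] x) (ψ x) ∂μ = ∫ x, rankOne (φ x) (ψ x) ∂μ := by
  rw [← integral_condExp hm (f := fun x => rankOne (φ x) (ψ x))]
  exact integral_congr_ae
    (condExp_bilin_of_aestronglyMeasurable_right rankOneL hψ hφψ hφ).symm

end L2

lemma IsMoorePenroseInv.apply_apply_dag {G : Type*} [NormedAddCommGroup G]
    [InnerProductSpace ℝ G] {C : G →L[ℝ] G} {dag : G →ₗ[ℝ] G}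
    (hC : (C : G →ₗ[ℝ] G).IsSymmetric) (hdag : IsMoorePenroseInv C dag) (h : G) :
    C (C (dag h)) = C h := by
  obtain ⟨hCdagC, -, hCdag, -⟩ := hdag
  refine ext_inner_left ℝ fun w => ?_
  calc ⟪w, C (C (dag h))⟫
      = ⟪C (dag h), C w⟫ := by rw [← hC.apply_clm, real_inner_comm]
    _ = ⟪h, C w⟫ := by rw [hCdag, hCdagC]
    _ = ⟪w, C h⟫ := by rw [← hC.apply_clm, real_inner_comm]

section CondExp

variable {α E F : Type*} {m m₀ : MeasurableSpace α} {μ : Measure α}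
  [NormedAddCommGroup E] [InnerProductSpace ℝ E] [NormedAddCommGroup F] [InnerProductSpace ℝ F]

lemma inner_condExp_ae_eq_condExp_inner [CompleteSpace E] {f : α → E} (hf : Integrable f μ)
    (g : E) : (fun x => ⟪μ[f|m] x, g⟫) =ᵐ[μ] μ[fun x => ⟪f x, g⟫|m] := by
  simp_rw [real_inner_comm g]
  exact (innerSL ℝ g).comp_condExp_comm hf

lemma inner_condExp_sub_integral_ae_eq [IsProbabilityMeasure μ] [CompleteSpace E]
    [CompleteSpace F] (hm : m ≤ m₀) {f : α → E} {a : α → F} (hf : Integrable f μ)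
    (ha : Integrable a μ) {g : E} {h : F}
    (hfa : (fun x => ⟪a x, h⟫) =ᵐ[μ] μ[fun x => ⟪f x, g⟫|m]) :
    (fun x => ⟪μ[fun y => f y - ∫ z, f z ∂μ|m] x, g⟫) =ᵐ[μ] fun x => ⟪a x - ∫ z, a z ∂μ, h⟫ := by
  have hmean : ⟪∫ z, a z ∂μ, h⟫ = ⟪∫ z, f z ∂μ, g⟫ := by
    rw [real_inner_comm h, real_inner_comm g, ← integral_inner ha, ← integral_inner hf]
    simp_rw [← real_inner_comm h, ← real_inner_comm g]
    rw [integral_congr_ae hfa, integral_condExp hm]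
  have hcentre : μ[fun y => f y - ∫ z, f z ∂μ|m] =ᵐ[μ] μ[f|m] - fun _ => ∫ z, f z ∂μ := by
    have h := condExp_sub (μ := μ) hf (integrable_const (∫ z, f z ∂μ)) m
    rw [condExp_const hm] at h
    exact h
  filter_upwards [hcentre, inner_condExp_ae_eq_condExp_inner hf g, hfa] with x hx hf_x ha_x
  rw [hx, Pi.sub_apply, inner_sub_left, inner_sub_left, hf_x, ← ha_x, hmean]

end CondExp

theorem condExp_ae_eq_integral_rankOne_apply_dag {α E F : Type*} {m m₀ : MeasurableSpace α}
    {μ : Measure α} [IsFiniteMeasure μ]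
    [NormedAddCommGroup E] [InnerProductSpace ℝ E] [CompleteSpace E] [SecondCountableTopology E]
    [NormedAddCommGroup F] [InnerProductSpace ℝ F] [CompleteSpace F]
    {φ : α → E} {ψ : α → F} (hm : m ≤ m₀) (hφ : MemLp φ 2 μ) (hψ : MemLp ψ 2 μ)
    (hψm : AEStronglyMeasurable[m] ψ μ)
    (hcond : ∀ g : E, ∃ h : F, (fun x => ⟪μ[φ|m] x, g⟫) =ᵐ[μ] fun x => ⟪ψ x, h⟫)
    {dag : F →ₗ[ℝ] F} (hdag : IsMoorePenroseInv (∫ x, rankOne (ψ x) (ψ x) ∂μ) dag) :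
    μ[φ|m] =ᵐ[μ] fun x => (∫ y, rankOne (φ y) (ψ y) ∂μ) (dag (ψ x)) := by
  set C := ∫ x, rankOne (ψ x) (ψ x) ∂μ with hC_def
  set B := ∫ x, rankOne (φ x) (ψ x) ∂μ with hB_def
  have hC : (C : F →ₗ[ℝ] F).IsSymmetric := isSymmetric_integral_rankOne_self hψ
  suffices hweak : ∀ g : E, (fun x => ⟪g, (μ[φ|m] - fun x => B (dag (ψ x))) x⟫) =ᵐ[μ] 0 from
    (ae_eq_zero_of_forall_inner hweak).mono fun x hx => sub_eq_zero.mp hx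
  intro g
  obtain ⟨h, hh⟩ := hcond g
  have hB : ∀ u, ⟪g, B u⟫ = ⟪h, C u⟫ := by
    intro u
    rw [hB_def, hC_def,
      ← integral_rankOne_condExp hm hψm (hφ.integrable_rankOne hψ) (hφ.integrable one_le_two),
      inner_integral_rankOne_apply ((hφ.condExp one_le_two).integrable_rankOne hψ),
      inner_integral_rankOne_apply (hψ.integrable_rankOne hψ)]
    refine integral_congr_ae ?_
    filter_upwards [hh] with x hx
    rw [real_inner_comm, hx, real_inner_comm]
  have hker : ∀ᵐ x ∂μ, ⟪h - C (dag h), ψ x⟫ = 0 :=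
    ae_inner_eq_zero_of_integral_rankOne_self_apply_eq_zero hψ
      (by rw [map_sub, hdag.apply_apply_dag hC, sub_self])
  filter_upwards [hh, hker] with x hx hx_ker
  rw [inner_sub_left] at hx_ker
  rw [Pi.sub_apply, inner_sub_right, real_inner_comm, hx, hB, ← hdag.2.2.1, real_inner_comm]
  exact hx_ker

theorem condExp_ctrKer_ae_eq_crossCov_dag {P : Measure Ω} [IsProbabilityMeasure P]
    {HX HZ GX GZ : Type*} [MeasurableSpace HX] [MeasurableSpace HZ]
    [NormedAddCommGroup GX] [InnerProductSpace ℝ GX] [CompleteSpace GX]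
    [SecondCountableTopology GX] [MeasurableSpace GX] [BorelSpace GX]
    [NormedAddCommGroup GZ] [InnerProductSpace ℝ GZ] [CompleteSpace GZ]
    [SecondCountableTopology GZ] [MeasurableSpace GZ] [BorelSpace GZ]
    {X : Ω → HX} {Z : Ω → HZ} {kX : HX → GX} {kZ : HZ → GZ}
    (hX : Measurable X) (hZ : Measurable Z) (hkX : Measurable kX) (hkZ : Measurable kZ)
    (hmX : Integrable (fun ω => ⟪kX (X ω), kX (X ω)⟫) P)
    (hmZ : Integrable (fun ω => ⟪kZ (Z ω), kZ (Z ω)⟫) P)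
    (hCEX : ∀ g : GX, ∃ h : GZ,
      (fun ω => ⟪kZ (Z ω), h⟫) =ᵐ[P]
        P[(fun ω => ⟪kX (X ω), g⟫)|MeasurableSpace.comap Z inferInstance])
    {dag : GZ →ₗ[ℝ] GZ} (hdag : IsMoorePenroseInv (crossCov P kZ Z kZ Z) dag) :
    P[(fun ω => ctrKer P kX X (X ω))|MeasurableSpace.comap Z inferInstance]
      =ᵐ[P] fun ω => crossCov P kX X kZ Z (dag (ctrKer P kZ Z (Z ω))) := by
  have hkX₂ := memLp_two_of_integrable_inner_self_s2 (hkX.comp hX).aestronglyMeasurable hmX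
  have hkZ₂ := memLp_two_of_integrable_inner_self_s2 (hkZ.comp hZ).aestronglyMeasurable hmZ
  refine condExp_ae_eq_integral_rankOne_apply_dag hZ.comap_le (hkX₂.sub (memLp_const _))
    (hkZ₂.sub (memLp_const _)) ?_ (fun g => ?_) hdag
  · exact ((hkZ.comp (comap_measurable Z)).sub_const _).aestronglyMeasurable
  · obtain ⟨h, hh⟩ := hCEX g
    exact ⟨h, inner_condExp_sub_integral_ae_eq hZ.comap_le (hkX₂.integrable one_le_two)
      (hkZ₂.integrable one_le_two) hh⟩

theorem statement2_general
    (P : Measure Ω) [IsProbabilityMeasure P]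
    {HX HY HZ GX GY GZ : Type*}
    [MeasurableSpace HX]
    [MeasurableSpace HY]
    [MeasurableSpace HZ]
    [NormedAddCommGroup GX] [InnerProductSpace ℝ GX] [CompleteSpace GX]
    [SecondCountableTopology GX] [MeasurableSpace GX] [BorelSpace GX]
    [NormedAddCommGroup GY] [InnerProductSpace ℝ GY] [CompleteSpace GY]
    [SecondCountableTopology GY] [MeasurableSpace GY] [BorelSpace GY]
    [NormedAddCommGroup GZ] [InnerProductSpace ℝ GZ] [CompleteSpace GZ]
    [SecondCountableTopology GZ] [MeasurableSpace GZ] [BorelSpace GZ]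
    (X : Ω → HX) (Y : Ω → HY) (Z : Ω → HZ)
    (hX : Measurable X) (hY : Measurable Y) (hZ : Measurable Z)
    (kX : HX → GX) (kY : HY → GY) (kZ : HZ → GZ)
    (hkX : Measurable kX) (hkY : Measurable kY) (hkZ : Measurable kZ)
    (hmX : Integrable (fun ω => ⟪kX (X ω), kX (X ω)⟫) P)
    (hmY : Integrable (fun ω => ⟪kY (Y ω), kY (Y ω)⟫) P)
    (hmZ : Integrable (fun ω => ⟪kZ (Z ω), kZ (Z ω)⟫) P)
    (hCEX : ∀ g : GX, ∃ h : GZ,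
      (fun ω => ⟪kZ (Z ω), h⟫) =ᵐ[P]
        P[(fun ω => ⟪kX (X ω), g⟫)|MeasurableSpace.comap Z inferInstance])
    (hCEY : ∀ g : GY, ∃ h : GZ,
      (fun ω => ⟪kZ (Z ω), h⟫) =ᵐ[P]
        P[(fun ω => ⟪kY (Y ω), g⟫)|MeasurableSpace.comap Z inferInstance])
    (dag : GZ →ₗ[ℝ] GZ)
    (hdag : IsMoorePenroseInv (crossCov P kZ Z kZ Z) dag) :
    -- E[κ̃_X(·,X) | Z] = B_{X|Z} κ̃_Z(·,Z) a.s., B_{X|Z} = Σ_XZ Σ_ZZ^†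
    (P[(fun ω => ctrKer P kX X (X ω))|MeasurableSpace.comap Z inferInstance]
      =ᵐ[P] fun ω => crossCov P kX X kZ Z (dag (ctrKer P kZ Z (Z ω)))) ∧
    (P[(fun ω => ctrKer P kY Y (Y ω))|MeasurableSpace.comap Z inferInstance]
      =ᵐ[P] fun ω => crossCov P kY Y kZ Z (dag (ctrKer P kZ Z (Z ω)))) :=
  ⟨condExp_ctrKer_ae_eq_crossCov_dag hX hZ hkX hkZ hmX hmZ hCEX hdag,
    condExp_ctrKer_ae_eq_crossCov_dag hY hZ hkY hkZ hmY hmZ hCEY hdag⟩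

theorem statement2
    (P : Measure Ω) [IsProbabilityMeasure P]
    {HX HY HZ GX GY GZ : Type*}
    [NormedAddCommGroup HX] [InnerProductSpace ℝ HX] [CompleteSpace HX]
    [SecondCountableTopology HX] [MeasurableSpace HX] [BorelSpace HX]
    [NormedAddCommGroup HY] [InnerProductSpace ℝ HY] [CompleteSpace HY]
    [SecondCountableTopology HY] [MeasurableSpace HY] [BorelSpace HY]
    [NormedAddCommGroup HZ] [InnerProductSpace ℝ HZ] [CompleteSpace HZ]
    [SecondCountableTopology HZ] [MeasurableSpace HZ] [BorelSpace HZ]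
    [NormedAddCommGroup GX] [InnerProductSpace ℝ GX] [CompleteSpace GX]
    [SecondCountableTopology GX] [MeasurableSpace GX] [BorelSpace GX]
    [NormedAddCommGroup GY] [InnerProductSpace ℝ GY] [CompleteSpace GY]
    [SecondCountableTopology GY] [MeasurableSpace GY] [BorelSpace GY]
    [NormedAddCommGroup GZ] [InnerProductSpace ℝ GZ] [CompleteSpace GZ]
    [SecondCountableTopology GZ] [MeasurableSpace GZ] [BorelSpace GZ]
    (X : Ω → HX) (Y : Ω → HY) (Z : Ω → HZ)
    (hX : Measurable X) (hY : Measurable Y) (hZ : Measurable Z)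
    (kX : HX → GX) (kY : HY → GY) (kZ : HZ → GZ)
    (hkX : Measurable kX) (hkY : Measurable kY) (hkZ : Measurable kZ)
    (hdX : (Submodule.span ℝ (Set.range kX)).topologicalClosure = ⊤)
    (hdY : (Submodule.span ℝ (Set.range kY)).topologicalClosure = ⊤)
    (hdZ : (Submodule.span ℝ (Set.range kZ)).topologicalClosure = ⊤)
    (hmX : Integrable (fun ω => ⟪kX (X ω), kX (X ω)⟫) P)
    (hmY : Integrable (fun ω => ⟪kY (Y ω), kY (Y ω)⟫) P)
    (hmZ : Integrable (fun ω => ⟪kZ (Z ω), kZ (Z ω)⟫) P)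
    (hCEX : ∀ g : GX, ∃ h : GZ,
      (fun ω => ⟪kZ (Z ω), h⟫) =ᵐ[P]
        P[(fun ω => ⟪kX (X ω), g⟫)|MeasurableSpace.comap Z inferInstance])
    (hCEY : ∀ g : GY, ∃ h : GZ,
      (fun ω => ⟪kZ (Z ω), h⟫) =ᵐ[P]
        P[(fun ω => ⟪kY (Y ω), g⟫)|MeasurableSpace.comap Z inferInstance])
    (dag : GZ →ₗ[ℝ] GZ)
    (hdag : IsMoorePenroseInv (crossCov P kZ Z kZ Z) dag) :
    -- E[κ̃_X(·,X) | Z] = B_{X|Z} κ̃_Z(·,Z) a.s., B_{X|Z} = Σ_XZ Σ_ZZ^†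
    (P[(fun ω => ctrKer P kX X (X ω))|MeasurableSpace.comap Z inferInstance]
      =ᵐ[P] fun ω => crossCov P kX X kZ Z (dag (ctrKer P kZ Z (Z ω)))) ∧
    (P[(fun ω => ctrKer P kY Y (Y ω))|MeasurableSpace.comap Z inferInstance]
      =ᵐ[P] fun ω => crossCov P kY Y kZ Z (dag (ctrKer P kZ Z (Z ω)))) :=
  statement2_general P X Y Z hX hY hZ kX kY kZ hkX hkY hkZ hmX hmY hmZ hCEX hCEY dag hdag
end
end

section
/- Suppose E[κ_Ẍ(Ẍ,Ẍ)] < ∞, E[κ_Ÿ(Ÿ,Ÿ)] < ∞, E[κ_Z(Z,Z)] < ∞, and that for every g ∈ G_Ẍ the function z ↦ E[g(Ẍ)|Z=z] has a version in G_Z and for every g ∈ G_Ÿ the function z ↦ E[g(Ÿ)|Z=z] has a version in G_Z. If X and Y are conditionally independent given Z, then Σ_{ẌŸ|Z} = 0. (No characteristic-kernel assumption is needed for this direction.) -/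
/-!
# Statement 7

Conjoined variables `Ẍ = (X,Z)`, `Ÿ = (Y,Z)` carry the product kernels
`κ_Ẍ = κ_X κ_Z`, `κ_Ÿ = κ_Y κ_Z`.  Under the moment assumptions and the
conditional-expectation assumption for `G_Ẍ` and `G_Ÿ`, if `X ⟂⟂ Y | Z`
then the conjoined conditional covariance operator
`Σ_{ẌŸ|Z} = Σ_{ẌŸ} − Σ_{ẌZ}Σ_ZZ^†Σ_{ZŸ}` vanishes.  No characteristic-kernel
assumption is needed for this direction.
-/

open MeasureTheory ProbabilityTheory Filter
open scoped RealInnerProductSpace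

noncomputable section

variable {Ω : Type*} [MeasurableSpace Ω]

/-- Conditional independence of `X` and `Y` given the σ-field `mZ`:
for all Borel sets `A`, `B`, `P(X∈A, Y∈B | Z) = P(X∈A | Z)·P(Y∈B | Z)` a.s. -/
def CondIndepGiven {HX HY : Type*} [MeasurableSpace HX] [MeasurableSpace HY]
    (P : Measure Ω) (mZ : MeasurableSpace Ω) (X : Ω → HX) (Y : Ω → HY) : Prop :=
  ∀ (A : Set HX) (B : Set HY), MeasurableSet A → MeasurableSet B →
    condExp mZ P
        (fun ω => A.indicator (fun _ => (1 : ℝ)) (X ω) *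
          B.indicator (fun _ => (1 : ℝ)) (Y ω))
      =ᵐ[P]
    fun ω => condExp mZ P (fun ω' => A.indicator (fun _ => (1 : ℝ)) (X ω')) ω *
      condExp mZ P (fun ω' => B.indicator (fun _ => (1 : ℝ)) (Y ω')) ω

/-!
Choose versions `α_u, β_g ∈ G_Z` of `E[u(Ẍ) | Z]` and `E[g(Ÿ) | Z]`. Pairing with test
vectors turns the conditional-expectation assumption into `Σ_{ZŸ} g = Σ_ZZ β_g` and
`⟪u, Σ_{ẌZ} w⟫ = ⟪α_u, Σ_ZZ w⟫`, so the Penrose identity `Σ_ZZ Σ_ZZ^† Σ_ZZ = Σ_ZZ` collapses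
`Σ_{ẌZ} Σ_ZZ^† Σ_{ZŸ} g` to `Σ_{ẌZ} β_g`, and
`⟪u, Σ_{ẌŸ|Z} g⟫ = Cov(u(Ẍ), g(Ÿ)) - Cov(u(Ẍ), β_g(Z))`.

For kernel sections `u = κ_Ẍ(·, (x, z))`, `g = κ_Ÿ(·, (y, z'))` the product structure of the
kernels writes `u(Ẍ) = φ(X) ψ(Z)` and `g(Ÿ) = γ(Y) δ(Z)`, and conditional independence gives
`E[φ(X) ψ(Z) γ(Y) δ(Z)] = E[φ(X) ψ(Z) E[γ(Y) δ(Z) | Z]]`: after reducing `φ` and `γ` to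
indicators this is the defining identity. Since `Σ_ZZ^†` need not be bounded, the pairing is not
obviously continuous in `g`; but it also equals `⟪u, Σ_{ẌŸ} g⟫ - ⟪α_u, Σ_{ZŸ} g⟫`, so it is given
by a vector in either argument and vanishes by density of the kernel sections on both sides.
-/

section InnerProductSpace

variable {E F : Type*} [NormedAddCommGroup E] [InnerProductSpace ℝ E]
  [NormedAddCommGroup F] [InnerProductSpace ℝ F]

theorem eq_zero_of_inner_range_eq_zero {ι : Type*} {k : ι → E}
    (hk : (Submodule.span ℝ (Set.range k)).topologicalClosure = ⊤) {x : E}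
    (h : ∀ i, ⟪k i, x⟫ = 0) : x = 0 := by
  refine (Submodule.dense_iff_topologicalClosure_eq_top.2 hk).eq_zero_of_inner_right ℝ
    fun v hv => ?_
  induction hv using Submodule.span_induction with
  | mem y hy => obtain ⟨i, rfl⟩ := hy; exact h i
  | zero => exact inner_zero_left x
  | add y z _ _ hy hz => rw [inner_add_left, hy, hz, add_zero]
  | smul c y _ hy => rw [real_inner_smul_left, hy, mul_zero]

theorem apply_eq_zero_of_inner_range_eq_zero {ι κ : Type*} {k₁ : ι → E} {k₂ : κ → F}
    (hk₁ : (Submodule.span ℝ (Set.range k₁)).topologicalClosure = ⊤)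
    (hk₂ : (Submodule.span ℝ (Set.range k₂)).topologicalClosure = ⊤) {D : F → E}
    (hD : ∀ u, ∃ θ, ∀ g, ⟪u, D g⟫ = ⟪θ, g⟫) (h : ∀ i j, ⟪k₁ i, D (k₂ j)⟫ = 0) (g : F) :
    D g = 0 := by
  have hDk₂ : ∀ j, D (k₂ j) = 0 := fun j => eq_zero_of_inner_range_eq_zero hk₁ (h · j)
  refine ext_inner_left ℝ fun u => ?_
  obtain ⟨θ, hθ⟩ := hD u
  have hθ₀ : θ = 0 := eq_zero_of_inner_range_eq_zero hk₂ fun j => by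
    rw [real_inner_comm, ← hθ, hDk₂, inner_zero_right]
  rw [hθ, hθ₀, inner_zero_left, inner_zero_right]

theorem apply_dag_apply_eq_of_inner_factor {A : E → F} {C dag : E → E}
    (hA : ∀ u, ∃ h, ∀ w, ⟪u, A w⟫ = ⟪h, C w⟫) (hC : ∀ f, C (dag (C f)) = C f) (f : E) :
    A (dag (C f)) = A f :=
  ext_inner_left ℝ fun u => by
    obtain ⟨h, hh⟩ := hA u
    rw [hh, hh, hC]

theorem Measurable.inner_const' {H : Type*} [MeasurableSpace H] [MeasurableSpace E]
    [OpensMeasurableSpace E] {k : H → E} (hk : Measurable k) {c : E} :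
    Measurable fun x => ⟪k x, c⟫ :=
  (continuous_id.inner continuous_const).measurable.comp hk

end InnerProductSpace

theorem norm_indicator_one_le {S : Type*} (A : Set S) (x : S) :
    ‖A.indicator (fun _ => (1 : ℝ)) x‖ ≤ 1 :=
  (norm_indicator_le_norm_self _ x).trans norm_one.le

section ConditionalExpectation

variable {α : Type*} {m mα : MeasurableSpace α} {μ : Measure α}

theorem ae_norm_mul_le_one {f g : α → ℝ} (hf : ∀ᵐ ω ∂μ, ‖f ω‖ ≤ 1) (hg : ∀ᵐ ω ∂μ, ‖g ω‖ ≤ 1) :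
    ∀ᵐ ω ∂μ, ‖f ω * g ω‖ ≤ 1 := by
  filter_upwards [hf, hg] with ω hfω hgω
  rw [norm_mul]
  exact mul_le_one₀ hfω (norm_nonneg _) hgω

theorem integral_mul_condExp_of_stronglyMeasurable_left (hm : m ≤ mα)
    [SigmaFinite (μ.trim hm)] {f g : α → ℝ} (hf : StronglyMeasurable[m] f)
    (hfg : Integrable (f * g) μ) (hg : Integrable g μ) :
    ∫ ω, f ω * g ω ∂μ = ∫ ω, f ω * μ[g|m] ω ∂μ := by
  rw [← integral_condExp hm]
  exact integral_congr_ae (condExp_mul_of_stronglyMeasurable_left hf hfg hg)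

theorem integral_condExp_mul_of_stronglyMeasurable_right (hm : m ≤ mα)
    [SigmaFinite (μ.trim hm)] {f g : α → ℝ} (hg : StronglyMeasurable[m] g)
    (hfg : Integrable (f * g) μ) (hf : Integrable f μ) :
    ∫ ω, μ[f|m] ω * g ω ∂μ = ∫ ω, f ω * g ω ∂μ :=
  (integral_congr_ae (condExp_mul_of_stronglyMeasurable_right hg hfg hf)).symm.trans
    (integral_condExp hm)

theorem integral_comp_mul_eq_of_forall_indicator [IsFiniteMeasure μ] {S : Type*}
    [MeasurableSpace S] {T : α → S} (hT : Measurable T) {g : S → ℝ} (hg : Measurable g)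
    {f₁ f₂ : α → ℝ} (hf₁ : Integrable f₁ μ) (hf₂ : Integrable f₂ μ)
    (hgf₁ : Integrable (fun ω => g (T ω) * f₁ ω) μ)
    (hgf₂ : Integrable (fun ω => g (T ω) * f₂ ω) μ)
    (h : ∀ A, MeasurableSet A →
      ∫ ω, A.indicator (fun _ => (1 : ℝ)) (T ω) * f₁ ω ∂μ =
        ∫ ω, A.indicator (fun _ => (1 : ℝ)) (T ω) * f₂ ω ∂μ) :
    ∫ ω, g (T ω) * f₁ ω ∂μ = ∫ ω, g (T ω) * f₂ ω ∂μ := by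
  set mT := MeasurableSpace.comap T ‹MeasurableSpace S›
  have hmT : mT ≤ mα := hT.comap_le
  have hce : μ[f₁|mT] =ᵐ[μ] μ[f₂|mT] := by
    refine ae_eq_condExp_of_forall_setIntegral_eq hmT hf₂
      (fun _ _ _ => integrable_condExp.integrableOn) ?_
      stronglyMeasurable_condExp.aestronglyMeasurable
    rintro _ ⟨A, hA, rfl⟩ _
    rw [setIntegral_condExp hmT hf₁ ⟨A, hA, rfl⟩, ← integral_indicator (hT hA),
      ← integral_indicator (hT hA)]
    have hind : ∀ f : α → ℝ,
        (T ⁻¹' A).indicator f = fun ω => A.indicator (fun _ => (1 : ℝ)) (T ω) * f ω :=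
      fun f => funext fun ω => by by_cases hω : T ω ∈ A <;> simp [hω]
    rw [hind, hind]
    exact h A hA
  have hgT : StronglyMeasurable[mT] (fun ω => g (T ω)) :=
    (hg.comp (comap_measurable T)).stronglyMeasurable
  rw [integral_mul_condExp_of_stronglyMeasurable_left hmT hgT hgf₁ hf₁,
    integral_mul_condExp_of_stronglyMeasurable_left hmT hgT hgf₂ hf₂]
  exact integral_congr_ae (hce.mono fun ω h => congrArg (g (T ω) * ·) h)

theorem covariance_eq_of_ae_eq_condExp [IsProbabilityMeasure μ] (hm : m ≤ mα)
    {F G G' : α → ℝ} (hF : MemLp F 2 μ) (hG : MemLp G 2 μ) (hG' : G' =ᵐ[μ] μ[G|m])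
    (hFG : ∫ ω, F ω * G ω ∂μ = ∫ ω, F ω * G' ω ∂μ) :
    cov[F, G; μ] = cov[F, G'; μ] := by
  have hmean : μ[G] = μ[G'] := by
    rw [← integral_condExp hm]
    exact integral_congr_ae hG'.symm
  rw [covariance_eq_sub hF hG, covariance_eq_sub hF ((hG.condExp one_le_two).ae_eq hG'.symm),
    hmean]
  exact congrArg (· - _) hFG

theorem covariance_eq_of_ae_eq_condExp_of_stronglyMeasurable [IsProbabilityMeasure μ]
    (hm : m ≤ mα) {F G G' : α → ℝ} (hF : MemLp F 2 μ) (hFm : StronglyMeasurable[m] F)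
    (hG : MemLp G 2 μ) (hG' : G' =ᵐ[μ] μ[G|m]) :
    cov[F, G; μ] = cov[F, G'; μ] := by
  refine covariance_eq_of_ae_eq_condExp hm hF hG hG' ?_
  rw [integral_mul_condExp_of_stronglyMeasurable_left hm hFm (hF.integrable_mul hG)
    (hG.integrable one_le_two)]
  exact integral_congr_ae (hG'.mono fun ω h => congrArg (F ω * ·) h.symm)

end ConditionalExpectation

section ConditionalIndependence

variable {α : Type*} {m mα : MeasurableSpace α} {μ : Measure α} [IsProbabilityMeasure μ]
  {HX HY HZ : Type*} [MeasurableSpace HX] [MeasurableSpace HY] [MeasurableSpace HZ]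
  {X : α → HX} {Y : α → HY} {Z : α → HZ}

theorem CondIndepGiven.integral_comp_mul_indicator_mul_eq (hCI : CondIndepGiven μ m X Y)
    (hm : m ≤ mα) (hX : Measurable X) (hY : Measurable Y) (hZ : Measurable[m] Z)
    {A : Set HX} {B : Set HY} (hA : MeasurableSet A) (hB : MeasurableSet B) {ρ : HZ → ℝ}
    (hρ : Measurable ρ) (hρZ : Integrable (fun ω => ρ (Z ω)) μ) :
    ∫ ω, ρ (Z ω) * (A.indicator (fun _ => (1 : ℝ)) (X ω) * B.indicator (fun _ => 1) (Y ω)) ∂μ =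
      ∫ ω, ρ (Z ω) * (μ[fun ω => A.indicator (fun _ => (1 : ℝ)) (X ω)|m] ω *
        B.indicator (fun _ => 1) (Y ω)) ∂μ := by
  have ha : Measurable fun ω => A.indicator (fun _ => (1 : ℝ)) (X ω) :=
    (measurable_const.indicator hA).comp hX
  have hb : Measurable fun ω => B.indicator (fun _ => (1 : ℝ)) (Y ω) :=
    (measurable_const.indicator hB).comp hY
  have ha₁ : ∀ᵐ ω ∂μ, ‖A.indicator (fun _ => (1 : ℝ)) (X ω)‖ ≤ 1 :=
    .of_forall fun ω => norm_indicator_one_le A (X ω)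
  have hb₁ : ∀ᵐ ω ∂μ, ‖B.indicator (fun _ => (1 : ℝ)) (Y ω)‖ ≤ 1 :=
    .of_forall fun ω => norm_indicator_one_le B (Y ω)
  have ha'₁ : ∀ᵐ ω ∂μ, ‖μ[fun ω => A.indicator (fun _ => (1 : ℝ)) (X ω)|m] ω‖ ≤ 1 :=
    ae_bdd_abs_condExp_of_ae_bdd_abs ha₁
  have ha'm := stronglyMeasurable_condExp (m := m) (μ := μ)
    (f := fun ω => A.indicator (fun _ => (1 : ℝ)) (X ω))
  have hb_int : Integrable (fun ω => B.indicator (fun _ => (1 : ℝ)) (Y ω)) μ :=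
    .of_bound hb.aestronglyMeasurable 1 hb₁
  have hρZm : StronglyMeasurable[m] fun ω => ρ (Z ω) := (hρ.comp hZ).stronglyMeasurable
  have hab : Integrable (fun ω => A.indicator (fun _ => (1 : ℝ)) (X ω) *
      B.indicator (fun _ => (1 : ℝ)) (Y ω)) μ :=
    hb_int.bdd_mul ha.aestronglyMeasurable ha₁
  have ha'b : Integrable (fun ω => μ[fun ω => A.indicator (fun _ => (1 : ℝ)) (X ω)|m] ω *
      B.indicator (fun _ => (1 : ℝ)) (Y ω)) μ :=
    hb_int.bdd_mul (ha'm.mono hm).aestronglyMeasurable ha'₁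
  rw [integral_mul_condExp_of_stronglyMeasurable_left hm hρZm
      (hρZ.mul_bdd hab.aestronglyMeasurable (ae_norm_mul_le_one ha₁ hb₁)) hab,
    integral_mul_condExp_of_stronglyMeasurable_left hm hρZm
      (hρZ.mul_bdd ha'b.aestronglyMeasurable (ae_norm_mul_le_one ha'₁ hb₁)) ha'b]
  refine integral_congr_ae ?_
  -- `E[1_A(X) 1_B(Y) | m] = E[1_A(X) | m] E[1_B(Y) | m] = E[E[1_A(X) | m] 1_B(Y) | m]`
  filter_upwards [(hCI A B hA hB).trans
    (condExp_mul_of_stronglyMeasurable_left ha'm ha'b hb_int).symm] with ω hω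
  exact congrArg _ hω

theorem CondIndepGiven.integral_indicator_mul_eq (hCI : CondIndepGiven μ m X Y)
    (hm : m ≤ mα) (hX : Measurable X) (hY : Measurable Y) (hZ : Measurable[m] Z)
    {A : Set HX} (hA : MeasurableSet A) {γ : HY → ℝ} {ρ : HZ → ℝ} (hγ : Measurable γ)
    (hρ : Measurable ρ) (hρZ : Integrable (fun ω => ρ (Z ω)) μ)
    (hγρ : Integrable (fun ω => γ (Y ω) * ρ (Z ω)) μ) :
    ∫ ω, A.indicator (fun _ => (1 : ℝ)) (X ω) * (γ (Y ω) * ρ (Z ω)) ∂μ =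
      ∫ ω, A.indicator (fun _ => (1 : ℝ)) (X ω) * μ[fun ω => γ (Y ω) * ρ (Z ω)|m] ω ∂μ := by
  have ha : Measurable fun ω => A.indicator (fun _ => (1 : ℝ)) (X ω) :=
    (measurable_const.indicator hA).comp hX
  have ha₁ : ∀ᵐ ω ∂μ, ‖A.indicator (fun _ => (1 : ℝ)) (X ω)‖ ≤ 1 :=
    .of_forall fun ω => norm_indicator_one_le A (X ω)
  have ha'₁ : ∀ᵐ ω ∂μ, ‖μ[fun ω => A.indicator (fun _ => (1 : ℝ)) (X ω)|m] ω‖ ≤ 1 :=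
    ae_bdd_abs_condExp_of_ae_bdd_abs ha₁
  have ha'm := stronglyMeasurable_condExp (m := m) (μ := μ)
    (f := fun ω => A.indicator (fun _ => (1 : ℝ)) (X ω))
  have hcond : ∫ ω, γ (Y ω) * (A.indicator (fun _ => (1 : ℝ)) (X ω) * ρ (Z ω)) ∂μ =
      ∫ ω, γ (Y ω) * (μ[fun ω => A.indicator (fun _ => (1 : ℝ)) (X ω)|m] ω * ρ (Z ω)) ∂μ := by
    refine integral_comp_mul_eq_of_forall_indicator hY hγ
      (hρZ.bdd_mul ha.aestronglyMeasurable ha₁)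
      (hρZ.bdd_mul (ha'm.mono hm).aestronglyMeasurable ha'₁)
      ((hγρ.bdd_mul ha.aestronglyMeasurable ha₁).congr (.of_forall fun ω => by ring))
      ((hγρ.bdd_mul (ha'm.mono hm).aestronglyMeasurable ha'₁).congr
        (.of_forall fun ω => by ring)) fun B hB => ?_
    calc _ = ∫ ω, ρ (Z ω) * (A.indicator (fun _ => (1 : ℝ)) (X ω) *
          B.indicator (fun _ => 1) (Y ω)) ∂μ := integral_congr_ae (.of_forall fun ω => by ring)
      _ = ∫ ω, ρ (Z ω) * (μ[fun ω => A.indicator (fun _ => (1 : ℝ)) (X ω)|m] ω *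
          B.indicator (fun _ => 1) (Y ω)) ∂μ :=
        hCI.integral_comp_mul_indicator_mul_eq hm hX hY hZ hA hB hρ hρZ
      _ = _ := integral_congr_ae (.of_forall fun ω => by ring)
  calc _ = ∫ ω, γ (Y ω) * (A.indicator (fun _ => (1 : ℝ)) (X ω) * ρ (Z ω)) ∂μ :=
        integral_congr_ae (.of_forall fun ω => by ring)
    _ = ∫ ω, μ[fun ω => A.indicator (fun _ => (1 : ℝ)) (X ω)|m] ω * (γ (Y ω) * ρ (Z ω)) ∂μ :=
        hcond.trans (integral_congr_ae (.of_forall fun ω => by ring))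
    _ = ∫ ω, μ[fun ω => A.indicator (fun _ => (1 : ℝ)) (X ω)|m] ω *
          μ[fun ω => γ (Y ω) * ρ (Z ω)|m] ω ∂μ :=
        integral_mul_condExp_of_stronglyMeasurable_left hm ha'm
          (hγρ.bdd_mul (ha'm.mono hm).aestronglyMeasurable ha'₁) hγρ
    _ = _ := integral_condExp_mul_of_stronglyMeasurable_right hm stronglyMeasurable_condExp
          (integrable_condExp.bdd_mul ha.aestronglyMeasurable ha₁)
          (.of_bound ha.aestronglyMeasurable 1 ha₁)

theorem CondIndepGiven.integral_mul_eq_integral_mul_condExp (hCI : CondIndepGiven μ m X Y)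
    (hm : m ≤ mα) (hX : Measurable X) (hY : Measurable Y) (hZ : Measurable[m] Z)
    {φ : HX → ℝ} {γ : HY → ℝ} {ψ δ : HZ → ℝ} (hφ : Measurable φ) (hγ : Measurable γ)
    (hψ : Measurable ψ) (hδ : Measurable δ) (hψZ : MemLp (fun ω => ψ (Z ω)) 2 μ)
    (hδZ : MemLp (fun ω => δ (Z ω)) 2 μ) (hF : MemLp (fun ω => φ (X ω) * ψ (Z ω)) 2 μ)
    (hG : MemLp (fun ω => γ (Y ω) * δ (Z ω)) 2 μ) :
    ∫ ω, φ (X ω) * ψ (Z ω) * (γ (Y ω) * δ (Z ω)) ∂μ =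
      ∫ ω, φ (X ω) * ψ (Z ω) * μ[fun ω => γ (Y ω) * δ (Z ω)|m] ω ∂μ := by
  have hψZm : StronglyMeasurable[m] fun ω => ψ (Z ω) := (hψ.comp hZ).stronglyMeasurable
  have hψG := condExp_mul_of_stronglyMeasurable_left hψZm (hψZ.integrable_mul hG)
    (hG.integrable one_le_two)
  have hcond : ∫ ω, φ (X ω) * (ψ (Z ω) * (γ (Y ω) * δ (Z ω))) ∂μ =
      ∫ ω, φ (X ω) * (ψ (Z ω) * μ[fun ω => γ (Y ω) * δ (Z ω)|m] ω) ∂μ := by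
    refine integral_comp_mul_eq_of_forall_indicator hX hφ (hψZ.integrable_mul hG)
      (hψZ.integrable_mul (hG.condExp one_le_two))
      ((hF.integrable_mul hG).congr (.of_forall fun ω => by simp only [Pi.mul_apply]; ring))
      ((hF.integrable_mul (hG.condExp one_le_two)).congr
        (.of_forall fun ω => by simp only [Pi.mul_apply]; ring)) fun A hA => ?_
    have h := hCI.integral_indicator_mul_eq hm hX hY hZ hA hγ (hψ.mul hδ)
      (hψZ.integrable_mul hδZ) ((hψZ.integrable_mul hG).congr
        (.of_forall fun ω => by simp only [Pi.mul_apply]; ring))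
    calc _ = _ := integral_congr_ae (.of_forall fun ω => by simp only [Pi.mul_apply]; ring)
      _ = _ := h
      _ = _ := by
        have hfun : (fun ω => γ (Y ω) * (ψ * δ) (Z ω)) =
            (fun ω => ψ (Z ω)) * fun ω => γ (Y ω) * δ (Z ω) :=
          funext fun ω => by simp only [Pi.mul_apply]; ring
        rw [hfun]
        refine integral_congr_ae ?_
        filter_upwards [hψG] with ω hω
        rw [hω, Pi.mul_apply]
  calc _ = _ := integral_congr_ae (.of_forall fun ω => by ring)
    _ = _ := hcond
    _ = _ := integral_congr_ae (.of_forall fun ω => by ring)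

theorem CondIndepGiven.covariance_eq_covariance_condExp (hCI : CondIndepGiven μ m X Y)
    (hm : m ≤ mα) (hX : Measurable X) (hY : Measurable Y) (hZ : Measurable[m] Z)
    {φ : HX → ℝ} {γ : HY → ℝ} {ψ δ : HZ → ℝ} (hφ : Measurable φ) (hγ : Measurable γ)
    (hψ : Measurable ψ) (hδ : Measurable δ) (hψZ : MemLp (fun ω => ψ (Z ω)) 2 μ)
    (hδZ : MemLp (fun ω => δ (Z ω)) 2 μ) (hF : MemLp (fun ω => φ (X ω) * ψ (Z ω)) 2 μ)
    (hG : MemLp (fun ω => γ (Y ω) * δ (Z ω)) 2 μ) {β : α → ℝ}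
    (hβ : β =ᵐ[μ] μ[fun ω => γ (Y ω) * δ (Z ω)|m]) :
    cov[fun ω => φ (X ω) * ψ (Z ω), fun ω => γ (Y ω) * δ (Z ω); μ] =
      cov[fun ω => φ (X ω) * ψ (Z ω), β; μ] :=
  covariance_eq_of_ae_eq_condExp hm hF hG hβ
    ((hCI.integral_mul_eq_integral_mul_condExp hm hX hY hZ hφ hγ hψ hδ hψZ hδZ hF hG).trans
      (integral_congr_ae (hβ.mono fun _ h => congrArg _ h.symm)))

end ConditionalIndependence

section CrossCovariance

variable {α : Type*} [MeasurableSpace α] {μ : Measure α}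
  {H₁ H₂ G₁ G₂ : Type*} [NormedAddCommGroup G₁] [InnerProductSpace ℝ G₁]
  [NormedAddCommGroup G₂] [InnerProductSpace ℝ G₂]

theorem memLp_two_of_integrable_inner_self_s7 [MeasurableSpace G₁] [OpensMeasurableSpace G₁]
    [SecondCountableTopology G₁] {f : α → G₁} (hf : Measurable f)
    (h : Integrable (fun ω => ⟪f ω, f ω⟫) μ) : MemLp f 2 μ :=
  (memLp_two_iff_integrable_sq_norm hf.aestronglyMeasurable).2
    (h.congr (.of_forall fun _ => real_inner_self_eq_norm_sq _))

theorem integrable_rankOne {f : α → G₁} {g : α → G₂} (hf : MemLp f 2 μ) (hg : MemLp g 2 μ) :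
    Integrable (fun ω => rankOne (f ω) (g ω)) μ :=
  memLp_one_iff_integrable.1
    (((ContinuousLinearMap.smulRightL ℝ G₂ G₁).comp (innerSL ℝ)).flip.memLp_of_bilin 1 hf hg)

variable [CompleteSpace G₁] [CompleteSpace G₂] {k₁ : H₁ → G₁} {X₁ : α → H₁} {k₂ : H₂ → G₂}
  {X₂ : α → H₂}

theorem inner_ctrKer (h₁ : Integrable (fun ω => k₁ (X₁ ω)) μ) (x : H₁) (u : G₁) :
    ⟪ctrKer μ k₁ X₁ x, u⟫ = ⟪k₁ x, u⟫ - μ[fun ω => ⟪k₁ (X₁ ω), u⟫] := by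
  rw [ctrKer, inner_sub_left, meanElem, real_inner_comm u (∫ ω, k₁ (X₁ ω) ∂μ),
    ← integral_inner h₁]
  exact congrArg _ (integral_congr_ae (.of_forall fun _ => real_inner_comm _ _))

variable [IsProbabilityMeasure μ]

theorem inner_crossCov (h₁ : MemLp (fun ω => k₁ (X₁ ω)) 2 μ)
    (h₂ : MemLp (fun ω => k₂ (X₂ ω)) 2 μ) (u : G₁) (v : G₂) :
    ⟪u, crossCov μ k₁ X₁ k₂ X₂ v⟫ =
      cov[fun ω => ⟪k₁ (X₁ ω), u⟫, fun ω => ⟪k₂ (X₂ ω), v⟫; μ] := by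
  have hint : Integrable
      (fun ω => rankOne (ctrKer μ k₁ X₁ (X₁ ω)) (ctrKer μ k₂ X₂ (X₂ ω))) μ :=
    integrable_rankOne (h₁.sub (memLp_const (meanElem μ k₁ X₁)))
      (h₂.sub (memLp_const (meanElem μ k₂ X₂)))
  rw [crossCov, ContinuousLinearMap.integral_apply hint,
    ← integral_inner (hint.apply_continuousLinearMap v), covariance]
  refine integral_congr_ae (.of_forall fun ω => ?_)
  simp only [rankOne, ContinuousLinearMap.smulRight_apply, innerSL_apply_apply,
    real_inner_smul_right]
  rw [real_inner_comm (ctrKer μ k₁ X₁ (X₁ ω)) u, inner_ctrKer (h₁.integrable one_le_two),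
    inner_ctrKer (h₂.integrable one_le_two), mul_comm]

theorem inner_crossCov_comm (h₁ : MemLp (fun ω => k₁ (X₁ ω)) 2 μ)
    (h₂ : MemLp (fun ω => k₂ (X₂ ω)) 2 μ) (u : G₁) (v : G₂) :
    ⟪u, crossCov μ k₁ X₁ k₂ X₂ v⟫ = ⟪v, crossCov μ k₂ X₂ k₁ X₁ u⟫ := by
  rw [inner_crossCov h₁ h₂, inner_crossCov h₂ h₁, covariance_comm]

theorem inner_crossCov_eq_of_ae_eq_condExp [MeasurableSpace H₂] [MeasurableSpace G₂]
    [OpensMeasurableSpace G₂] (hk₂ : Measurable k₂) (hX₂ : Measurable X₂)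
    (h₁ : MemLp (fun ω => k₁ (X₁ ω)) 2 μ) (h₂ : MemLp (fun ω => k₂ (X₂ ω)) 2 μ) {u : G₁}
    {h : G₂} (hce : (fun ω => ⟪k₂ (X₂ ω), h⟫) =ᵐ[μ]
      μ[fun ω => ⟪k₁ (X₁ ω), u⟫|MeasurableSpace.comap X₂ inferInstance]) (w : G₂) :
    ⟪u, crossCov μ k₁ X₁ k₂ X₂ w⟫ = ⟪h, crossCov μ k₂ X₂ k₂ X₂ w⟫ := by
  rw [inner_crossCov h₁ h₂, inner_crossCov h₂ h₂, covariance_comm,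
    covariance_comm (fun ω => ⟪k₂ (X₂ ω), h⟫)]
  exact covariance_eq_of_ae_eq_condExp_of_stronglyMeasurable hX₂.comap_le (h₂.inner_const w)
    (hk₂.inner_const'.comp (comap_measurable X₂)).stronglyMeasurable (h₁.inner_const u) hce

end CrossCovariance

theorem statement7_general
    (P : Measure Ω) [IsProbabilityMeasure P]
    {HX HY HZ GX GY GZ GXd GYd : Type*}
    [MeasurableSpace HX] [MeasurableSpace HY] [MeasurableSpace HZ]
    [NormedAddCommGroup GX] [InnerProductSpace ℝ GX] [MeasurableSpace GX] [BorelSpace GX]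
    [NormedAddCommGroup GY] [InnerProductSpace ℝ GY] [MeasurableSpace GY] [BorelSpace GY]
    [NormedAddCommGroup GZ] [InnerProductSpace ℝ GZ] [CompleteSpace GZ]
    [SecondCountableTopology GZ] [MeasurableSpace GZ] [BorelSpace GZ]
    [NormedAddCommGroup GXd] [InnerProductSpace ℝ GXd] [CompleteSpace GXd]
    [SecondCountableTopology GXd] [MeasurableSpace GXd] [BorelSpace GXd]
    [NormedAddCommGroup GYd] [InnerProductSpace ℝ GYd] [CompleteSpace GYd]
    [SecondCountableTopology GYd] [MeasurableSpace GYd] [BorelSpace GYd]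
    (X : Ω → HX) (Y : Ω → HY) (Z : Ω → HZ)
    (hX : Measurable X) (hY : Measurable Y) (hZ : Measurable Z)
    -- feature maps of κ_X, κ_Y, κ_Z with dense span
    (kX : HX → GX) (kY : HY → GY) (kZ : HZ → GZ)
    (hkX : Measurable kX) (hkY : Measurable kY) (hkZ : Measurable kZ)
    -- feature maps of the conjoined product kernels κ_Ẍ = κ_X κ_Z, κ_Ÿ = κ_Y κ_Z
    (kXd : HX × HZ → GXd) (kYd : HY × HZ → GYd)
    (hkXd : Measurable kXd) (hkYd : Measurable kYd)
    (hprodX : ∀ (x x' : HX) (z z' : HZ),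
      ⟪kXd (x, z), kXd (x', z')⟫ = ⟪kX x, kX x'⟫ * ⟪kZ z, kZ z'⟫)
    (hprodY : ∀ (y y' : HY) (z z' : HZ),
      ⟪kYd (y, z), kYd (y', z')⟫ = ⟪kY y, kY y'⟫ * ⟪kZ z, kZ z'⟫)
    (hdXd : (Submodule.span ℝ (Set.range kXd)).topologicalClosure = ⊤)
    (hdYd : (Submodule.span ℝ (Set.range kYd)).topologicalClosure = ⊤)
    -- moment assumptions E[κ_Ẍ(Ẍ,Ẍ)] < ∞, E[κ_Ÿ(Ÿ,Ÿ)] < ∞, E[κ_Z(Z,Z)] < ∞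
    (hmXd : Integrable (fun ω => ⟪kXd (X ω, Z ω), kXd (X ω, Z ω)⟫) P)
    (hmYd : Integrable (fun ω => ⟪kYd (Y ω, Z ω), kYd (Y ω, Z ω)⟫) P)
    (hmZ : Integrable (fun ω => ⟪kZ (Z ω), kZ (Z ω)⟫) P)
    -- conditional expectation assumption for G_Ẍ and G_Ÿ
    (hCEXd : ∀ g : GXd, ∃ h : GZ,
      (fun ω => ⟪kZ (Z ω), h⟫) =ᵐ[P]
        condExp (MeasurableSpace.comap Z inferInstance) P
          (fun ω => ⟪kXd (X ω, Z ω), g⟫))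
    (hCEYd : ∀ g : GYd, ∃ h : GZ,
      (fun ω => ⟪kZ (Z ω), h⟫) =ᵐ[P]
        condExp (MeasurableSpace.comap Z inferInstance) P
          (fun ω => ⟪kYd (Y ω, Z ω), g⟫))
    -- the Moore–Penrose inverse of Σ_ZZ
    (dag : GZ →ₗ[ℝ] GZ)
    (hdag : IsMoorePenroseInv (crossCov P kZ Z kZ Z) dag) :
    -- X ⟂⟂ Y | Z  ⟹  Σ_{ẌŸ|Z} = 0
    CondIndepGiven P (MeasurableSpace.comap Z inferInstance) X Y →
      ∀ v : GYd,
        crossCov P kXd (fun ω => (X ω, Z ω)) kYd (fun ω => (Y ω, Z ω)) v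
          - crossCov P kXd (fun ω => (X ω, Z ω)) kZ Z
              (dag (crossCov P kZ Z kYd (fun ω => (Y ω, Z ω)) v)) = 0 := by
  intro hCI v
  have hK₁ : MemLp (fun ω => kXd (X ω, Z ω)) 2 P :=
    memLp_two_of_integrable_inner_self_s7 (hkXd.comp (hX.prodMk hZ)) hmXd
  have hK₂ : MemLp (fun ω => kYd (Y ω, Z ω)) 2 P :=
    memLp_two_of_integrable_inner_self_s7 (hkYd.comp (hY.prodMk hZ)) hmYd
  have hKZ : MemLp (fun ω => kZ (Z ω)) 2 P := memLp_two_of_integrable_inner_self_s7 (hkZ.comp hZ) hmZ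
  choose condX condX_spec using hCEXd
  choose condY condY_spec using hCEYd
  have hXZ : ∀ u w, ⟪u, crossCov P kXd (fun ω => (X ω, Z ω)) kZ Z w⟫ =
      ⟪condX u, crossCov P kZ Z kZ Z w⟫ := fun u =>
    inner_crossCov_eq_of_ae_eq_condExp hkZ hZ hK₁ hKZ (condX_spec u)
  have hZY : ∀ g, crossCov P kZ Z kYd (fun ω => (Y ω, Z ω)) g = crossCov P kZ Z kZ Z (condY g) :=
    fun g => ext_inner_left ℝ fun w => by
      rw [inner_crossCov_comm hKZ hK₂,
        inner_crossCov_eq_of_ae_eq_condExp hkZ hZ hK₂ hKZ (condY_spec g),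
        inner_crossCov_comm hKZ hKZ]
  rw [hZY, apply_dag_apply_eq_of_inner_factor (fun u => ⟨condX u, hXZ u⟩) hdag.1]
  refine apply_eq_zero_of_inner_range_eq_zero hdXd hdYd
    (D := fun g => crossCov P kXd (fun ω => (X ω, Z ω)) kYd (fun ω => (Y ω, Z ω)) g -
      crossCov P kXd (fun ω => (X ω, Z ω)) kZ Z (condY g)) (fun u => ?_) ?_ v
  · refine ⟨(crossCov P kXd (fun ω => (X ω, Z ω)) kYd (fun ω => (Y ω, Z ω))).adjoint u -
      (crossCov P kZ Z kYd (fun ω => (Y ω, Z ω))).adjoint (condX u), fun g => ?_⟩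
    rw [inner_sub_right, inner_sub_left, ContinuousLinearMap.adjoint_inner_left,
      ContinuousLinearMap.adjoint_inner_left, hXZ, hZY]
  · rintro ⟨x, z⟩ ⟨y, z'⟩
    have hβ := condY_spec (kYd (y, z'))
    have hF := hK₁.inner_const (𝕜 := ℝ) (kXd (x, z))
    have hG := hK₂.inner_const (𝕜 := ℝ) (kYd (y, z'))
    rw [inner_sub_right, inner_crossCov hK₁ hK₂, inner_crossCov hK₁ hKZ, sub_eq_zero]
    simp only [hprodX, hprodY] at hβ hF hG ⊢
    exact hCI.covariance_eq_covariance_condExp (φ := fun x' => ⟪kX x', kX x⟫)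
      (γ := fun y' => ⟪kY y', kY y⟫) (ψ := fun z'' => ⟪kZ z'', kZ z⟫)
      (δ := fun z'' => ⟪kZ z'', kZ z'⟫) hZ.comap_le hX hY (comap_measurable Z)
      hkX.inner_const' hkY.inner_const' hkZ.inner_const' hkZ.inner_const' (hKZ.inner_const _)
      (hKZ.inner_const _) hF hG hβ

theorem statement7
    (P : Measure Ω) [IsProbabilityMeasure P]
    {HX HY HZ GX GY GZ GXd GYd : Type*}
    [NormedAddCommGroup HX] [InnerProductSpace ℝ HX] [CompleteSpace HX]
    [SecondCountableTopology HX] [MeasurableSpace HX] [BorelSpace HX]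
    [NormedAddCommGroup HY] [InnerProductSpace ℝ HY] [CompleteSpace HY]
    [SecondCountableTopology HY] [MeasurableSpace HY] [BorelSpace HY]
    [NormedAddCommGroup HZ] [InnerProductSpace ℝ HZ] [CompleteSpace HZ]
    [SecondCountableTopology HZ] [MeasurableSpace HZ] [BorelSpace HZ]
    [NormedAddCommGroup GX] [InnerProductSpace ℝ GX] [CompleteSpace GX]
    [SecondCountableTopology GX] [MeasurableSpace GX] [BorelSpace GX]
    [NormedAddCommGroup GY] [InnerProductSpace ℝ GY] [CompleteSpace GY]
    [SecondCountableTopology GY] [MeasurableSpace GY] [BorelSpace GY]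
    [NormedAddCommGroup GZ] [InnerProductSpace ℝ GZ] [CompleteSpace GZ]
    [SecondCountableTopology GZ] [MeasurableSpace GZ] [BorelSpace GZ]
    [NormedAddCommGroup GXd] [InnerProductSpace ℝ GXd] [CompleteSpace GXd]
    [SecondCountableTopology GXd] [MeasurableSpace GXd] [BorelSpace GXd]
    [NormedAddCommGroup GYd] [InnerProductSpace ℝ GYd] [CompleteSpace GYd]
    [SecondCountableTopology GYd] [MeasurableSpace GYd] [BorelSpace GYd]
    (X : Ω → HX) (Y : Ω → HY) (Z : Ω → HZ)
    (hX : Measurable X) (hY : Measurable Y) (hZ : Measurable Z)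
    -- feature maps of κ_X, κ_Y, κ_Z with dense span
    (kX : HX → GX) (kY : HY → GY) (kZ : HZ → GZ)
    (hkX : Measurable kX) (hkY : Measurable kY) (hkZ : Measurable kZ)
    (hdX : (Submodule.span ℝ (Set.range kX)).topologicalClosure = ⊤)
    (hdY : (Submodule.span ℝ (Set.range kY)).topologicalClosure = ⊤)
    (hdZ : (Submodule.span ℝ (Set.range kZ)).topologicalClosure = ⊤)
    -- feature maps of the conjoined product kernels κ_Ẍ = κ_X κ_Z, κ_Ÿ = κ_Y κ_Z
    (kXd : HX × HZ → GXd) (kYd : HY × HZ → GYd)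
    (hkXd : Measurable kXd) (hkYd : Measurable kYd)
    (hprodX : ∀ (x x' : HX) (z z' : HZ),
      ⟪kXd (x, z), kXd (x', z')⟫ = ⟪kX x, kX x'⟫ * ⟪kZ z, kZ z'⟫)
    (hprodY : ∀ (y y' : HY) (z z' : HZ),
      ⟪kYd (y, z), kYd (y', z')⟫ = ⟪kY y, kY y'⟫ * ⟪kZ z, kZ z'⟫)
    (hdXd : (Submodule.span ℝ (Set.range kXd)).topologicalClosure = ⊤)
    (hdYd : (Submodule.span ℝ (Set.range kYd)).topologicalClosure = ⊤)
    -- moment assumptions E[κ_Ẍ(Ẍ,Ẍ)] < ∞, E[κ_Ÿ(Ÿ,Ÿ)] < ∞, E[κ_Z(Z,Z)] < ∞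
    (hmXd : Integrable (fun ω => ⟪kXd (X ω, Z ω), kXd (X ω, Z ω)⟫) P)
    (hmYd : Integrable (fun ω => ⟪kYd (Y ω, Z ω), kYd (Y ω, Z ω)⟫) P)
    (hmZ : Integrable (fun ω => ⟪kZ (Z ω), kZ (Z ω)⟫) P)
    -- conditional expectation assumption for G_Ẍ and G_Ÿ
    (hCEXd : ∀ g : GXd, ∃ h : GZ,
      (fun ω => ⟪kZ (Z ω), h⟫) =ᵐ[P]
        condExp (MeasurableSpace.comap Z inferInstance) P
          (fun ω => ⟪kXd (X ω, Z ω), g⟫))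
    (hCEYd : ∀ g : GYd, ∃ h : GZ,
      (fun ω => ⟪kZ (Z ω), h⟫) =ᵐ[P]
        condExp (MeasurableSpace.comap Z inferInstance) P
          (fun ω => ⟪kYd (Y ω, Z ω), g⟫))
    -- the Moore–Penrose inverse of Σ_ZZ
    (dag : GZ →ₗ[ℝ] GZ)
    (hdag : IsMoorePenroseInv (crossCov P kZ Z kZ Z) dag) :
    -- X ⟂⟂ Y | Z  ⟹  Σ_{ẌŸ|Z} = 0
    CondIndepGiven P (MeasurableSpace.comap Z inferInstance) X Y →
      ∀ v : GYd,
        crossCov P kXd (fun ω => (X ω, Z ω)) kYd (fun ω => (Y ω, Z ω)) v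
          - crossCov P kXd (fun ω => (X ω, Z ω)) kZ Z
              (dag (crossCov P kZ Z kYd (fun ω => (Y ω, Z ω)) v)) = 0 :=
  statement7_general P X Y Z hX hY hZ kX kY kZ hkX hkY hkZ kXd kYd hkXd hkYd hprodX hprodY hdXd hdYd
    hmXd hmYd hmZ hCEXd hCEYd dag hdag
end
end
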